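/- Let m(t) = (√3/10)(9 sin(√3 t/9) + 7 sin(√3 t/3)). Then the function G(t) = −m″(t)/m(t) is strictly decreasing on the interval (0, 3√3 π/2). -/

import Mathlib

/-!
With `u = √3 t / 9` and `s = sin u`, the triple-angle formula `sin 3u = 3 s - 4 s³` gives
`m = (√3/5) s (15 - 14 s²)` and `m″ = -(√3/15) s (11 - 14 s²)`, so that
`G = (11 - 14 s²) / (3 (15 - 14 s²)) = 1/3 - 4 / (3 (15 - 14 s²))`. This is strictly decreasing
in `s ∈ [0, 1]`, and `s` strictly increases with `t` because `u` runs through `(0, π/2)`.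
-/

open Real

/-- The profile function of the Sinclair–Tanaka example of a model surface. -/
noncomputable def stProfile (t : ℝ) : ℝ :=
  (Real.sqrt 3 / 10) * (9 * Real.sin (Real.sqrt 3 * t / 9) + 7 * Real.sin (Real.sqrt 3 * t / 3))

lemma deriv_deriv_sin_add_sin (a b k l : ℝ) :
    deriv (deriv fun t => a * sin (k * t) + b * sin (l * t)) =
      fun t => -(a * k ^ 2 * sin (k * t) + b * l ^ 2 * sin (l * t)) := by
  have h1 : deriv (fun t => a * sin (k * t) + b * sin (l * t)) =
      fun t => a * k * cos (k * t) + b * l * cos (l * t) := by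
    funext t
    have := (((hasDerivAt_id t).const_mul k).sin.const_mul a).add
      (((hasDerivAt_id t).const_mul l).sin.const_mul b)
    simp only [id, mul_one] at this
    exact this.deriv.trans (by ring)
  rw [h1]
  funext t
  have := (((hasDerivAt_id t).const_mul k).cos.const_mul (a * k)).add
      (((hasDerivAt_id t).const_mul l).cos.const_mul (b * l))
  simp only [id, mul_one] at this
  exact this.deriv.trans (by ring)

lemma stProfile_eq_sin_add_sin :
    stProfile = fun t => 9 * √3 / 10 * sin (√3 / 9 * t) + 7 * √3 / 10 * sin (√3 / 3 * t) := by
  funext t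
  simp only [stProfile, mul_div_right_comm]
  ring

lemma deriv_deriv_stProfile (t : ℝ) :
    deriv (deriv stProfile) t = -(√3 / 30) * (sin (√3 * t / 9) + 7 * sin (√3 * t / 3)) := by
  rw [stProfile_eq_sin_add_sin, deriv_deriv_sin_add_sin]
  simp only [div_pow, sq_sqrt (show (0:ℝ) ≤ 3 by norm_num), mul_div_right_comm]
  ring

noncomputable def stCurvatureOfSin (s : ℝ) : ℝ := (11 - 14 * s ^ 2) / (3 * (15 - 14 * s ^ 2))

lemma strictAntiOn_stCurvatureOfSin : StrictAntiOn stCurvatureOfSin (Set.Icc 0 1) := by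
  intro a ⟨ha0, ha1⟩ b ⟨hb0, hb1⟩ hab
  have hda : 0 < 3 * (15 - 14 * a ^ 2) := by nlinarith
  have hdb : 0 < 3 * (15 - 14 * b ^ 2) := by nlinarith
  rw [stCurvatureOfSin, stCurvatureOfSin, div_lt_div_iff₀ hdb hda]
  nlinarith [mul_pos (sub_pos.2 hab) (show 0 < b + a by linarith)]

lemma curvature_eq_stCurvatureOfSin (t : ℝ) (ht : sin (√3 * t / 9) ≠ 0) :
    -deriv (deriv stProfile) t / stProfile t = stCurvatureOfSin (sin (√3 * t / 9)) := by
  have h_triple : sin (√3 * t / 3) = 3 * sin (√3 * t / 9) - 4 * sin (√3 * t / 9) ^ 3 := by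
    rw [← sin_three_mul]; ring_nf
  have hs1 := sin_sq_le_one (√3 * t / 9)
  rw [deriv_deriv_stProfile, stProfile, h_triple, stCurvatureOfSin]
  set s := sin (√3 * t / 9)
  have h15 : 15 - 14 * s ^ 2 ≠ 0 := by nlinarith
  rw [show 9 * s + 7 * (3 * s - 4 * s ^ 3) = 2 * s * (15 - 14 * s ^ 2) by ring,
    div_eq_div_iff (by simp [ht, h15]) (by simp [h15])]
  ring

lemma mapsTo_sqrt_three_mul_div_nine :
    Set.MapsTo (fun t => √3 * t / 9) (Set.Ioo 0 (3 * √3 * π / 2)) (Set.Ioo 0 (π / 2)) := by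
  intro t ⟨ht0, htπ⟩
  have h3 : √3 * √3 = 3 := mul_self_sqrt (by norm_num)
  constructor
  · positivity
  · nlinarith [sqrt_pos.2 (show (0:ℝ) < 3 by norm_num)]

/-- **Sinclair–Tanaka example, curvature monotonicity.** The Gaussian curvature
`G(t) = −m″(t)/m(t)` of the surface of revolution with profile
`m(t) = (√3/10)(9 sin(√3 t/9) + 7 sin(√3 t/3))` is strictly decreasing on
`(0, 3√3 π/2)` (from the pole to the equator). -/
theorem sinclairTanaka_curvature_strictAnti :
    StrictAntiOn (fun t => -(deriv (deriv stProfile) t) / stProfile t)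
      (Set.Ioo (0 : ℝ) (3 * Real.sqrt 3 * π / 2)) := by
  have hu := mapsTo_sqrt_three_mul_div_nine
  have hsin_pos : ∀ t ∈ Set.Ioo (0 : ℝ) (3 * √3 * π / 2), 0 < sin (√3 * t / 9) := fun t ht =>
    sin_pos_of_pos_of_lt_pi (hu ht).1 ((hu ht).2.trans (by linarith [pi_pos]))
  have hmono : StrictMonoOn (sin ∘ fun t => √3 * t / 9) (Set.Ioo 0 (3 * √3 * π / 2)) :=
    strictMonoOn_sin.comp (fun a _ b _ hab => by gcongr)
      (hu.mono_right fun _ ⟨hu0, huπ⟩ => ⟨by linarith [pi_pos], huπ.le⟩)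
  refine (strictAntiOn_stCurvatureOfSin.comp_strictMonoOn hmono
    fun t ht => ⟨(hsin_pos t ht).le, sin_le_one _⟩).congr fun t ht => ?_
  exact (curvature_eq_stCurvatureOfSin t (hsin_pos t ht).ne').symm
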